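/- arXiv:1611.08393 — 5 statements merged into one kernel-verified Lean document; each statement's English description precedes it below -/
import Mathlib

section
/- (Sufficiency of the GTRS optimality conditions) Let N, N₀ be n×n real symmetric matrices, p, p₀ ∈ ℝⁿ, and b₀, ν ∈ ℝ. Suppose x* ∈ ℝⁿ and ξ* ∈ ℝ satisfy: (i) (N + ξ*N₀)x* + p + ξ*p₀ = 0; (ii) x*ᵀN₀x* + 2p₀ᵀx* + b₀ = ν; (iii) N + ξ*N₀ is positive semidefinite. Then x* is a global minimizer of the GTRS: for every x ∈ ℝⁿ with xᵀN₀x + 2p₀ᵀx + b₀ = ν, one has xᵀNx + 2pᵀx ≥ x*ᵀNx* + 2pᵀx*. -/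
open Matrix

lemma symm_dot {n : ℕ} (A : Matrix (Fin n) (Fin n) ℝ) (hA : A.IsSymm)
    (u v : Fin n → ℝ) : u ⬝ᵥ A.mulVec v = v ⬝ᵥ A.mulVec u := by
  rw [Matrix.dotProduct_mulVec, ← Matrix.mulVec_transpose, hA, dotProduct_comm]

/-- Sufficiency of the GTRS optimality conditions: if `(N + ξ*N₀)x* + p + ξ*p₀ = 0`,
`x*` is feasible, and `N + ξ*N₀ ⪰ 0`, then `x*` is a global minimizer of the GTRS. -/
theorem gtrs_sufficiency {n : ℕ} (N N₀ : Matrix (Fin n) (Fin n) ℝ)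
    (hN : N.IsSymm) (hN₀ : N₀.IsSymm) (p p₀ : Fin n → ℝ) (b₀ ν : ℝ)
    (xs : Fin n → ℝ) (ξs : ℝ)
    (hstat : (N + ξs • N₀).mulVec xs + p + ξs • p₀ = 0)
    (hfeas : xs ⬝ᵥ N₀.mulVec xs + 2 * (p₀ ⬝ᵥ xs) + b₀ = ν)
    (hpsd : (N + ξs • N₀).PosSemidef) :
    ∀ x : Fin n → ℝ, x ⬝ᵥ N₀.mulVec x + 2 * (p₀ ⬝ᵥ x) + b₀ = ν →
      xs ⬝ᵥ N.mulVec xs + 2 * (p ⬝ᵥ xs) ≤ x ⬝ᵥ N.mulVec x + 2 * (p ⬝ᵥ x) := by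
  intro x hx
  have hpos := hpsd.dotProduct_mulVec_nonneg (x - xs)
  simp only [RCLike.star_def, star_trivial] at hpos
  have hx' := congrArg (fun v => x ⬝ᵥ v) hstat
  have hxs' := congrArg (fun v => xs ⬝ᵥ v) hstat
  simp only [Matrix.add_mulVec, Matrix.smul_mulVec, dotProduct_add,
    dotProduct_smul, dotProduct_zero, smul_eq_mul] at hx' hxs'
  have hsymN := symm_dot N hN x xs
  have hsymN₀ := symm_dot N₀ hN₀ x xs
  have hexp : (x - xs) ⬝ᵥ (N + ξs • N₀).mulVec (x - xs)
      = x ⬝ᵥ N.mulVec x + ξs * (x ⬝ᵥ N₀.mulVec x)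
        - x ⬝ᵥ N.mulVec xs - ξs * (x ⬝ᵥ N₀.mulVec xs)
        - xs ⬝ᵥ N.mulVec x - ξs * (xs ⬝ᵥ N₀.mulVec x)
        + xs ⬝ᵥ N.mulVec xs + ξs * (xs ⬝ᵥ N₀.mulVec xs) := by
    simp only [Matrix.add_mulVec, Matrix.smul_mulVec, Matrix.mulVec_sub,
      sub_dotProduct, dotProduct_add, dotProduct_sub,
      dotProduct_smul, smul_eq_mul]
    ring
  have hpc : p₀ ⬝ᵥ x = x ⬝ᵥ p₀ := dotProduct_comm _ _
  have hpc2 : p₀ ⬝ᵥ xs = xs ⬝ᵥ p₀ := dotProduct_comm _ _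
  have hpc3 : p ⬝ᵥ x = x ⬝ᵥ p := dotProduct_comm _ _
  have hpc4 : p ⬝ᵥ xs = xs ⬝ᵥ p := dotProduct_comm _ _
  rw [hexp] at hpos
  have heq : x ⬝ᵥ N₀.mulVec x + 2 * (p₀ ⬝ᵥ x) = xs ⬝ᵥ N₀.mulVec xs + 2 * (p₀ ⬝ᵥ xs) := by
    linarith
  have hmul : ξs * (x ⬝ᵥ N₀.mulVec x + 2 * (p₀ ⬝ᵥ x))
      = ξs * (xs ⬝ᵥ N₀.mulVec xs + 2 * (p₀ ⬝ᵥ xs)) := by rw [heq]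
  have hsm : ξs * (x ⬝ᵥ N₀.mulVec xs) = ξs * (xs ⬝ᵥ N₀.mulVec x) := by rw [hsymN₀]
  rw [hpc] at hmul
  rw [hpc2] at hmul
  linarith [hpos, hx', hxs', hsymN, hsymN₀, hmul, hsm, hpc3, hpc4]
end

section
/- (Uniqueness under strict positive definiteness) Let N, N₀ be n×n real symmetric matrices, p, p₀ ∈ ℝⁿ, and b₀, ν ∈ ℝ. Suppose x* ∈ ℝⁿ and ξ* ∈ ℝ satisfy (N + ξ*N₀)x* + p + ξ*p₀ = 0, x*ᵀN₀x* + 2p₀ᵀx* + b₀ = ν, and N + ξ*N₀ is positive definite. Then x* is the unique global minimizer of the GTRS: every x ≠ x* with xᵀN₀x + 2p₀ᵀx + b₀ = ν satisfies xᵀNx + 2pᵀx > x*ᵀNx* + 2pᵀx*. -/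
open Matrix

/-- Uniqueness under strict positive definiteness: if `(N + ξ*N₀)x* + p + ξ*p₀ = 0`,
`x*` is feasible, and `N + ξ*N₀ ≻ 0`, then `x*` is the unique global minimizer of the
GTRS: every feasible `x ≠ x*` has strictly larger objective value. -/
theorem gtrs_uniqueness {n : ℕ} (N N₀ : Matrix (Fin n) (Fin n) ℝ)
    (hN : N.IsSymm) (hN₀ : N₀.IsSymm) (p p₀ : Fin n → ℝ) (b₀ ν : ℝ)
    (xs : Fin n → ℝ) (ξs : ℝ)
    (hstat : (N + ξs • N₀).mulVec xs + p + ξs • p₀ = 0)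
    (hfeas : xs ⬝ᵥ N₀.mulVec xs + 2 * (p₀ ⬝ᵥ xs) + b₀ = ν)
    (hpd : (N + ξs • N₀).PosDef) :
    ∀ x : Fin n → ℝ, x ≠ xs → x ⬝ᵥ N₀.mulVec x + 2 * (p₀ ⬝ᵥ x) + b₀ = ν →
      xs ⬝ᵥ N.mulVec xs + 2 * (p ⬝ᵥ xs) < x ⬝ᵥ N.mulVec x + 2 * (p ⬝ᵥ x) := by
  intro x hx hfeasx
  set M := N + ξs • N₀ with hM
  have hMsymm : M.IsSymm := hN.add (hN₀.smul ξs)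
  have hMxs : M.mulVec xs = -(p + ξs • p₀) := by
    rw [add_assoc] at hstat
    exact eq_neg_of_add_eq_zero_left hstat
  -- scalar stationarity facts
  have hdot : ∀ v : Fin n → ℝ, v ⬝ᵥ M.mulVec xs = -(p ⬝ᵥ v + ξs * (p₀ ⬝ᵥ v)) := by
    intro v
    rw [hMxs]
    simp [dotProduct_add, dotProduct_smul, dotProduct_comm]
  -- symmetry of the bilinear form
  have hsym : ∀ v w : Fin n → ℝ, v ⬝ᵥ M.mulVec w = w ⬝ᵥ M.mulVec v := by
    intro v w
    rw [dotProduct_mulVec, ← mulVec_transpose, hMsymm.eq, dotProduct_comm]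
  -- positivity of the difference quadratic
  have hd : x - xs ≠ 0 := sub_ne_zero.2 hx
  have hpos : 0 < (x - xs) ⬝ᵥ M.mulVec (x - xs) := by
    have := hpd.dotProduct_mulVec_pos hd
    simpa using this
  have hexp : (x - xs) ⬝ᵥ M.mulVec (x - xs)
      = x ⬝ᵥ M.mulVec x - 2 * (x ⬝ᵥ M.mulVec xs) + xs ⬝ᵥ M.mulVec xs := by
    rw [mulVec_sub, dotProduct_sub, sub_dotProduct, sub_dotProduct,
      hsym xs x]
    ring
  -- expand M
  have hMxx : ∀ v : Fin n → ℝ,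
      v ⬝ᵥ M.mulVec v = v ⬝ᵥ N.mulVec v + ξs * (v ⬝ᵥ N₀.mulVec v) := by
    intro v
    rw [hM, add_mulVec, smul_mulVec, dotProduct_add, dotProduct_smul]
    simp
  have h1 := hdot x
  have h2 := hdot xs
  rw [hexp, h1, h2, hMxx x] at hpos
  have heq : x ⬝ᵥ N₀.mulVec x + 2 * (p₀ ⬝ᵥ x)
      = xs ⬝ᵥ N₀.mulVec xs + 2 * (p₀ ⬝ᵥ xs) := by linarith
  have hξ : ξs * (x ⬝ᵥ N₀.mulVec x + 2 * (p₀ ⬝ᵥ x))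
      = ξs * (xs ⬝ᵥ N₀.mulVec xs + 2 * (p₀ ⬝ᵥ xs)) := by rw [heq]
  have h3 : xs ⬝ᵥ N.mulVec xs + ξs * (xs ⬝ᵥ N₀.mulVec xs)
      = -(p ⬝ᵥ xs + ξs * (p₀ ⬝ᵥ xs)) := by rw [← hMxx xs, h2]
  linarith [hpos, hξ, h3]
end

section
/- (Necessity of the GTRS optimality conditions) Let N be an n×n real symmetric matrix, N₀ an n×n real symmetric positive definite matrix, p, p₀ ∈ ℝⁿ, and b₀, ν ∈ ℝ. Assume the feasible set {x : xᵀN₀x + 2p₀ᵀx + b₀ = ν} is nonempty and contains a point x̂ with N₀x̂ + p₀ ≠ 0. If x* is a global minimizer of xᵀNx + 2pᵀx subject to xᵀN₀x + 2p₀ᵀx + b₀ = ν, then there exists ξ* ∈ ℝ such that (N + ξ*N₀)x* + p + ξ*p₀ = 0 and N + ξ*N₀ is positive semidefinite. -/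
open Matrix


private lemma bil_symm {n : ℕ} (M : Matrix (Fin n) (Fin n) ℝ) (hM : Mᵀ = M) (x y : Fin n → ℝ) :
    x ⬝ᵥ M *ᵥ y = y ⬝ᵥ M *ᵥ x := by
  rw [Matrix.dotProduct_mulVec, ← Matrix.mulVec_transpose, hM, dotProduct_comm]

private lemma quad_add {n : ℕ} (M : Matrix (Fin n) (Fin n) ℝ) (hM : Mᵀ = M) (x y : Fin n → ℝ) :
    (x + y) ⬝ᵥ M *ᵥ (x + y) = x ⬝ᵥ M *ᵥ x + 2 * (x ⬝ᵥ M *ᵥ y) + y ⬝ᵥ M *ᵥ y := by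
  simp only [Matrix.mulVec_add, dotProduct_add, add_dotProduct]
  rw [bil_symm M hM y x]
  ring

private lemma quad_sub {n : ℕ} (M : Matrix (Fin n) (Fin n) ℝ) (hM : Mᵀ = M) (x y : Fin n → ℝ) :
    (x - y) ⬝ᵥ M *ᵥ (x - y) = x ⬝ᵥ M *ᵥ x - 2 * (x ⬝ᵥ M *ᵥ y) + y ⬝ᵥ M *ᵥ y := by
  simp only [Matrix.mulVec_sub, dotProduct_sub, sub_dotProduct]
  rw [bil_symm M hM y x]
  ring

private lemma quad_smul {n : ℕ} (M : Matrix (Fin n) (Fin n) ℝ) (hM : Mᵀ = M)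
    (x v : Fin n → ℝ) (a b : ℝ) :
    (a • x + b • v) ⬝ᵥ M *ᵥ (a • x + b • v)
      = a ^ 2 * (x ⬝ᵥ M *ᵥ x) + 2 * (a * b) * (x ⬝ᵥ M *ᵥ v) + b ^ 2 * (v ⬝ᵥ M *ᵥ v) := by
  rw [quad_add M hM]
  simp only [Matrix.mulVec_smul, smul_dotProduct, dotProduct_smul, smul_eq_mul]
  ring

private lemma quadT {n : ℕ} (M : Matrix (Fin n) (Fin n) ℝ) (hM : Mᵀ = M)
    (x d : Fin n → ℝ) (t : ℝ) :
    (x + t • d) ⬝ᵥ M *ᵥ (x + t • d)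
      = x ⬝ᵥ M *ᵥ x + 2 * t * (x ⬝ᵥ M *ᵥ d) + t ^ 2 * (d ⬝ᵥ M *ᵥ d) := by
  rw [quad_add M hM]
  simp only [Matrix.mulVec_smul, dotProduct_smul, smul_dotProduct, smul_eq_mul]
  ring

private lemma quad_nonneg_at_zero (a b cst : ℝ)
    (h : ∀ ε : ℝ, ε ≠ 0 → 0 ≤ a * ε ^ 2 + b * ε + cst) : 0 ≤ cst := by
  by_contra hc
  push_neg at hc
  set D := |a| + |b| + 1 with hD
  have hDpos : (0:ℝ) < D := by positivity
  set ε := min 1 ((-cst) / D) with hε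
  have hpos : 0 < ε := lt_min one_pos (div_pos (by linarith) hDpos)
  have h1 := h ε hpos.ne'
  have hε1 : ε ≤ 1 := min_le_left _ _
  have hε2 : ε * D ≤ -cst := by
    have := min_le_right 1 ((-cst) / D)
    calc ε * D ≤ ((-cst)/D) * D := by nlinarith
    _ = -cst := by field_simp
  have ha0 : a * ε ^ 2 ≤ |a| * ε ^ 2 := mul_le_mul_of_nonneg_right (le_abs_self a) (sq_nonneg ε)
  have hsq : ε ^ 2 ≤ ε := by nlinarith
  have ha : a * ε ^ 2 ≤ |a| * ε := le_trans ha0 (mul_le_mul_of_nonneg_left hsq (abs_nonneg a))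
  have hb : b * ε ≤ |b| * ε := mul_le_mul_of_nonneg_right (le_abs_self b) hpos.le
  have hfin : (|a| + |b|) * ε + ε ≤ -cst := by rw [hD] at hε2; nlinarith
  nlinarith


/-- Necessity of the GTRS optimality conditions: with `N₀ ≻ 0` and a nondegenerate
feasible point `x̂` (i.e. `N₀x̂ + p₀ ≠ 0`), any global minimizer `x*` of the GTRS admits
a multiplier `ξ*` with `(N + ξ*N₀)x* + p + ξ*p₀ = 0` and `N + ξ*N₀ ⪰ 0`. -/
theorem gtrs_necessity {n : ℕ} (N N₀ : Matrix (Fin n) (Fin n) ℝ)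
    (hN : N.IsSymm) (hN₀ : N₀.PosDef) (p p₀ : Fin n → ℝ) (b₀ ν : ℝ)
    (xhat : Fin n → ℝ)
    (hhatfeas : xhat ⬝ᵥ N₀.mulVec xhat + 2 * (p₀ ⬝ᵥ xhat) + b₀ = ν)
    (hnondeg : N₀.mulVec xhat + p₀ ≠ 0)
    (xs : Fin n → ℝ)
    (hfeas : xs ⬝ᵥ N₀.mulVec xs + 2 * (p₀ ⬝ᵥ xs) + b₀ = ν)
    (hopt : ∀ x : Fin n → ℝ, x ⬝ᵥ N₀.mulVec x + 2 * (p₀ ⬝ᵥ x) + b₀ = ν →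
      xs ⬝ᵥ N.mulVec xs + 2 * (p ⬝ᵥ xs) ≤ x ⬝ᵥ N.mulVec x + 2 * (p ⬝ᵥ x)) :
    ∃ ξs : ℝ, (N + ξs • N₀).mulVec xs + p + ξs • p₀ = 0 ∧ (N + ξs • N₀).PosSemidef := by
  have hsymm : Nᵀ = N := hN
  have hs0 : N₀ᵀ = N₀ := by have h1 : N₀ᴴ = N₀ := hN₀.1; simpa using h1
  have hpd : ∀ z : Fin n → ℝ, z ≠ 0 → 0 < z ⬝ᵥ N₀ *ᵥ z := fun z hz => by simpa using hN₀.dotProduct_mulVec_pos hz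
  set c := N₀⁻¹ *ᵥ p₀ with hcdef
  have hc : N₀ *ᵥ c = p₀ := by
    rw [hcdef, Matrix.mulVec_mulVec, Matrix.mul_nonsing_inv _ hN₀.det_pos.ne'.isUnit,
      Matrix.one_mulVec]
  set q := p - N *ᵥ c with hqdef
  set ys := xs + c with hysdef
  set r := ys ⬝ᵥ N₀ *ᵥ ys with hrdef
  -- constraint translation
  have hcon : ∀ x : Fin n → ℝ, (x + c) ⬝ᵥ N₀ *ᵥ (x + c)
      = x ⬝ᵥ N₀ *ᵥ x + 2 * (p₀ ⬝ᵥ x) + c ⬝ᵥ N₀ *ᵥ c := by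
    intro x
    rw [quad_add N₀ hs0, hc, dotProduct_comm x p₀]
  have hκr : r = ν - b₀ + c ⬝ᵥ N₀ *ᵥ c := by
    rw [hrdef, hysdef, hcon xs]; linarith
  have hfeasY : ∀ w : Fin n → ℝ, w ⬝ᵥ N₀ *ᵥ w = r →
      (w - c) ⬝ᵥ N₀ *ᵥ (w - c) + 2 * (p₀ ⬝ᵥ (w - c)) + b₀ = ν := by
    intro w hw
    have h2 := hcon (w - c)
    rw [sub_add_cancel] at h2
    rw [hκr] at hw
    linarith
  -- objective translation
  have hqdot : ∀ x : Fin n → ℝ, q ⬝ᵥ x = p ⬝ᵥ x - x ⬝ᵥ N *ᵥ c := by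
    intro x
    rw [hqdef, sub_dotProduct, dotProduct_comm x (N *ᵥ c)]
  have hobj : ∀ x : Fin n → ℝ, (x + c) ⬝ᵥ N *ᵥ (x + c) + 2 * (q ⬝ᵥ (x + c))
      = x ⬝ᵥ N *ᵥ x + 2 * (p ⬝ᵥ x) + (c ⬝ᵥ N *ᵥ c + 2 * (q ⬝ᵥ c)) := by
    intro x
    rw [quad_add N hsymm, dotProduct_add, hqdot x]
    ring
  have hoptY : ∀ w : Fin n → ℝ, w ⬝ᵥ N₀ *ᵥ w = r →
      ys ⬝ᵥ N *ᵥ ys + 2 * (q ⬝ᵥ ys) ≤ w ⬝ᵥ N *ᵥ w + 2 * (q ⬝ᵥ w) := by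
    intro w hw
    have h1 := hopt (w - c) (hfeasY w hw)
    have h2 := hobj (w - c)
    rw [sub_add_cancel] at h2
    have h3 := hobj xs
    rw [← hysdef] at h3
    linarith
  -- r > 0
  have hyh : N₀ *ᵥ (xhat + c) = N₀ *ᵥ xhat + p₀ := by rw [Matrix.mulVec_add, hc]
  have hyhne : xhat + c ≠ 0 := fun h => hnondeg (by rw [← hyh, h, Matrix.mulVec_zero])
  have hrpos : 0 < r := by
    have h1 := hpd _ hyhne
    have h2 := hcon xhat
    rw [hκr]
    linarith
  have hysne : ys ≠ 0 := by
    intro h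
    rw [hrdef, h] at hrpos
    simp at hrpos
  set g := N *ᵥ ys + q with hgdef
  -- Lagrange multiplier
  have hlag : ∃ ξ : ℝ, g + ξ • (N₀ *ᵥ ys) = 0 := by
    set u := N₀⁻¹ *ᵥ g with hudef
    have hNu : N₀ *ᵥ u = g := by
      rw [hudef, Matrix.mulVec_mulVec, Matrix.mul_nonsing_inv _ hN₀.det_pos.ne'.isUnit,
        Matrix.one_mulVec]
    set μ := (u ⬝ᵥ N₀ *ᵥ ys) / r with hμdef
    set v := u - μ • ys with hvdef
    by_cases hv0 : v = 0
    · refine ⟨-μ, ?_⟩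
      have hu : u = μ • ys := by rwa [sub_eq_zero] at hv0
      have : g = μ • (N₀ *ᵥ ys) := by rw [← hNu, hu, Matrix.mulVec_smul]
      rw [this, neg_smul]
      abel
    · exfalso
      have hvys : v ⬝ᵥ N₀ *ᵥ ys = 0 := by
        rw [hvdef, sub_dotProduct, smul_dotProduct, hμdef, smul_eq_mul,
          ← hrdef]
        field_simp
        ring
      have hgv : g ⬝ᵥ v = v ⬝ᵥ N₀ *ᵥ v := by
        have h1 : g ⬝ᵥ v = u ⬝ᵥ N₀ *ᵥ v := by
          rw [← hNu, dotProduct_comm, bil_symm N₀ hs0 v u]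
        have h2 : u ⬝ᵥ N₀ *ᵥ v = v ⬝ᵥ N₀ *ᵥ v + μ * (ys ⬝ᵥ N₀ *ᵥ v) := by
          have : u = v + μ • ys := by rw [hvdef]; abel
          rw [this, add_dotProduct, smul_dotProduct, smul_eq_mul]
        have h3 : ys ⬝ᵥ N₀ *ᵥ v = 0 := by rw [← bil_symm N₀ hs0 v ys]; exact hvys
        rw [h1, h2, h3, mul_zero, add_zero]
      have hvv : 0 < v ⬝ᵥ N₀ *ᵥ v := hpd v hv0
      set α := Real.sqrt (r / (v ⬝ᵥ N₀ *ᵥ v)) with hαdef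
      have hαpos : 0 < α := Real.sqrt_pos.2 (div_pos hrpos hvv)
      have hα2 : α ^ 2 * (v ⬝ᵥ N₀ *ᵥ v) = r := by
        rw [hαdef, Real.sq_sqrt (div_pos hrpos hvv).le]
        field_simp
      -- the curve stays on the ellipsoid
      have hcurve : ∀ θ : ℝ,
          (Real.cos θ • ys + (α * Real.sin θ) • v) ⬝ᵥ N₀ *ᵥ
            (Real.cos θ • ys + (α * Real.sin θ) • v) = r := by
        intro θ
        rw [quad_smul N₀ hs0, ← hrdef]
        have h4 : ys ⬝ᵥ N₀ *ᵥ v = 0 := by rw [← bil_symm N₀ hs0 v ys]; exact hvys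
        rw [h4]
        have h5 := Real.sin_sq_add_cos_sq θ
        nlinarith [hα2]
      set A := ys ⬝ᵥ N *ᵥ ys with hA
      set B := 2 * α * (ys ⬝ᵥ N *ᵥ v) with hB
      set C := α ^ 2 * (v ⬝ᵥ N *ᵥ v) with hC
      set D := 2 * (q ⬝ᵥ ys) with hD
      set E := 2 * α * (q ⬝ᵥ v) with hE
      set φ : ℝ → ℝ := fun θ => A * Real.cos θ ^ 2 + B * (Real.cos θ * Real.sin θ)
        + C * Real.sin θ ^ 2 + D * Real.cos θ + E * Real.sin θ with hφdef
      have hφval : ∀ θ : ℝ, φ θ = (Real.cos θ • ys + (α * Real.sin θ) • v) ⬝ᵥ N *ᵥ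
          (Real.cos θ • ys + (α * Real.sin θ) • v)
          + 2 * (q ⬝ᵥ (Real.cos θ • ys + (α * Real.sin θ) • v)) := by
        intro θ
        rw [quad_smul N hsymm, dotProduct_add, dotProduct_smul,
          dotProduct_smul, hφdef, hA, hB, hC, hD, hE]
        simp only [smul_eq_mul]
        ring
      have hmin : ∀ θ : ℝ, φ 0 ≤ φ θ := by
        intro θ
        have h6 := hoptY _ (hcurve θ)
        have h7 := hφval θ
        have h8 := hφval 0
        rw [Real.cos_zero, Real.sin_zero] at h8
        simp only [one_smul, mul_zero, zero_smul, add_zero] at h8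
        linarith
      have hder : HasDerivAt φ (B + E) 0 := by
        have hcs : HasDerivAt Real.cos (-Real.sin 0) 0 := Real.hasDerivAt_cos 0
        have hsn : HasDerivAt Real.sin (Real.cos 0) 0 := Real.hasDerivAt_sin 0
        have h := ((((hcs.pow 2).const_mul A).add ((hcs.mul hsn).const_mul B)).add
            ((hsn.pow 2).const_mul C)).add (hcs.const_mul D) |>.add (hsn.const_mul E)
        rw [hφdef]
        refine h.congr_deriv ?_
        simp
      have hzero : B + E = 0 := by
        have hm : IsLocalMin φ 0 := Filter.Eventually.of_forall hmin
        have := hm.deriv_eq_zero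
        rwa [hder.deriv] at this
      have hpos' : 0 < B + E := by
        have h9 : g ⬝ᵥ v = ys ⬝ᵥ N *ᵥ v + q ⬝ᵥ v := by
          rw [hgdef, add_dotProduct, dotProduct_comm (N *ᵥ ys) v,
            bil_symm N hsymm v ys]
        have h10 : B + E = 2 * α * (g ⬝ᵥ v) := by rw [hB, hE, h9]; ring
        rw [h10, hgv]
        positivity
      linarith
  obtain ⟨ξ, hξ⟩ := hlag
  have hMt : (N + ξ • N₀)ᵀ = N + ξ • N₀ := by
    rw [Matrix.transpose_add, Matrix.transpose_smul, hsymm, hs0]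
  have hysEq : (N + ξ • N₀) *ᵥ ys = -q := by
    rw [Matrix.add_mulVec, Matrix.smul_mulVec]
    have : N *ᵥ ys + ξ • (N₀ *ᵥ ys) + q = 0 := by
      rw [hgdef] at hξ; rw [← hξ]; abel
    linear_combination (norm := module) this
  refine ⟨ξ, ?_, ?_⟩
  · have heq : (N + ξ • N₀) *ᵥ xs + p + ξ • p₀ = g + ξ • (N₀ *ᵥ ys) := by
      rw [hgdef, hysdef, hqdef, Matrix.add_mulVec, Matrix.smul_mulVec,
        Matrix.mulVec_add, Matrix.mulVec_add, hc, smul_add]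
      abel
    rw [heq, hξ]
  · have key : ∀ w : Fin n → ℝ, w ⬝ᵥ N₀ *ᵥ w = r →
        0 ≤ (w - ys) ⬝ᵥ (N + ξ • N₀) *ᵥ (w - ys) := by
      intro w hw
      have e1 := quad_sub (N + ξ • N₀) hMt w ys
      have e2 : w ⬝ᵥ (N + ξ • N₀) *ᵥ ys = -(q ⬝ᵥ w) := by
        rw [hysEq, dotProduct_neg, dotProduct_comm]
      have e3 : ys ⬝ᵥ (N + ξ • N₀) *ᵥ ys = -(q ⬝ᵥ ys) := by
        rw [hysEq, dotProduct_neg, dotProduct_comm]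
      have e4 : ∀ z : Fin n → ℝ, z ⬝ᵥ (N + ξ • N₀) *ᵥ z
          = z ⬝ᵥ N *ᵥ z + ξ * (z ⬝ᵥ N₀ *ᵥ z) := by
        intro z
        rw [Matrix.add_mulVec, dotProduct_add, Matrix.smul_mulVec,
          dotProduct_smul, smul_eq_mul]
      have e5 := hoptY w hw
      have e6 : ys ⬝ᵥ N *ᵥ ys + ξ * r = -(q ⬝ᵥ ys) := by
        have := e4 ys
        rw [e3, ← hrdef] at this
        linarith
      have e7 : w ⬝ᵥ (N + ξ • N₀) *ᵥ w = w ⬝ᵥ N *ᵥ w + ξ * r := by rw [e4 w, hw]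
      rw [e1, e2, e3, e7]
      linarith
    have key2 : ∀ d : Fin n → ℝ, d ⬝ᵥ N₀ *ᵥ ys ≠ 0 →
        0 ≤ d ⬝ᵥ (N + ξ • N₀) *ᵥ d := by
      intro d hd
      have hdne : d ≠ 0 := by intro h; apply hd; rw [h]; simp
      have hdd := hpd d hdne
      set t := -2 * (d ⬝ᵥ N₀ *ᵥ ys) / (d ⬝ᵥ N₀ *ᵥ d) with htdef
      have htne : t ≠ 0 := div_ne_zero (by intro h; apply hd; linarith) hdd.ne'
      have hw : (ys + t • d) ⬝ᵥ N₀ *ᵥ (ys + t • d) = r := by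
        rw [quadT N₀ hs0, ← hrdef]
        rw [bil_symm N₀ hs0 ys d, htdef]
        field_simp
        ring
      have h2 := key (ys + t • d) hw
      have h3 : ys + t • d - ys = t • d := by abel
      rw [h3] at h2
      have h4 : (t • d) ⬝ᵥ (N + ξ • N₀) *ᵥ (t • d)
          = t ^ 2 * (d ⬝ᵥ (N + ξ • N₀) *ᵥ d) := by
        rw [smul_dotProduct, Matrix.mulVec_smul, dotProduct_smul]
        simp only [smul_eq_mul]
        ring
      rw [h4] at h2
      have ht2 : 0 < t ^ 2 := by positivity
      nlinarith
    refine Matrix.PosSemidef.of_dotProduct_mulVec_nonneg ?_ ?_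
    · show (N + ξ • N₀)ᴴ = N + ξ • N₀
      simpa using hMt
    · intro x
      have hstar : star x = x := by
        funext i; simp
      rw [hstar]
      show (0:ℝ) ≤ x ⬝ᵥ (N + ξ • N₀) *ᵥ x
      by_cases hd : x ⬝ᵥ N₀ *ᵥ ys = 0
      · have hP : ∀ ε : ℝ, ε ≠ 0 →
            0 ≤ (ys ⬝ᵥ (N + ξ • N₀) *ᵥ ys) * ε ^ 2
              + (2 * (x ⬝ᵥ (N + ξ • N₀) *ᵥ ys)) * ε + x ⬝ᵥ (N + ξ • N₀) *ᵥ x := by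
          intro ε hε
          have h5 : (x + ε • ys) ⬝ᵥ N₀ *ᵥ ys ≠ 0 := by
            rw [add_dotProduct, hd, smul_dotProduct, smul_eq_mul, zero_add,
              ← hrdef]
            exact mul_ne_zero hε hrpos.ne'
          have h6 := key2 _ h5
          have h7 := quadT (N + ξ • N₀) hMt x ys ε
          rw [h7] at h6
          linarith
        exact quad_nonneg_at_zero _ _ _ hP
      · exact key2 x hd
end

section
/- Let N be an n×n real symmetric matrix, N₀ an n×n real symmetric positive definite matrix, p, p₀ ∈ ℝⁿ, and b₀, ν ∈ ℝ. On the interval I = {ξ ∈ ℝ : N + ξN₀ ≻ 0}, define x(ξ) = −(N + ξN₀)⁻¹(p + ξp₀) and φ(ξ) = x(ξ)ᵀN₀x(ξ) + 2p₀ᵀx(ξ) + b₀ − ν. Then φ is nonincreasing on I: for all ξ₁, ξ₂ ∈ I with ξ₁ < ξ₂, φ(ξ₁) ≥ φ(ξ₂). Moreover, if there is no point x̄ ∈ ℝⁿ satisfying both Nx̄ = −p and N₀x̄ = −p₀, then φ is strictly decreasing on I, and consequently the equation φ(ξ) = 0 has at most one solution in I. -/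
open Matrix

/-- The stationary point `x(ξ) = −(N + ξN₀)⁻¹(p + ξp₀)` of the GTRS Lagrangian. -/
noncomputable def gtrsX {n : ℕ} (N N₀ : Matrix (Fin n) (Fin n) ℝ) (p p₀ : Fin n → ℝ)
    (ξ : ℝ) : Fin n → ℝ :=
  -((N + ξ • N₀)⁻¹.mulVec (p + ξ • p₀))

/-- The constraint residual `φ(ξ) = x(ξ)ᵀN₀x(ξ) + 2p₀ᵀx(ξ) + b₀ − ν`. -/
noncomputable def gtrsPhi {n : ℕ} (N N₀ : Matrix (Fin n) (Fin n) ℝ) (p p₀ : Fin n → ℝ)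
    (b₀ ν : ℝ) (ξ : ℝ) : ℝ :=
  gtrsX N N₀ p p₀ ξ ⬝ᵥ N₀.mulVec (gtrsX N N₀ p p₀ ξ)
    + 2 * (p₀ ⬝ᵥ gtrsX N N₀ p p₀ ξ) + b₀ - ν

lemma gtrs_dot_symm {n : ℕ} {M : Matrix (Fin n) (Fin n) ℝ} (hM : Mᵀ = M) (u v : Fin n → ℝ) :
    u ⬝ᵥ M *ᵥ v = v ⬝ᵥ M *ᵥ u := by
  rw [dotProduct_mulVec, ← mulVec_transpose, hM, dotProduct_comm]

lemma gtrs_stat {n : ℕ} (N N₀ : Matrix (Fin n) (Fin n) ℝ) (p p₀ : Fin n → ℝ) (ξ : ℝ)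
    (h : (N + ξ • N₀).PosDef) :
    (N + ξ • N₀) *ᵥ gtrsX N N₀ p p₀ ξ = -(p + ξ • p₀) := by
  rw [gtrsX, mulVec_neg, mulVec_mulVec,
    Matrix.mul_nonsing_inv _ ((Matrix.isUnit_iff_isUnit_det _).1 h.isUnit), one_mulVec]

lemma gtrs_key {n : ℕ} (N N₀ : Matrix (Fin n) (Fin n) ℝ) (hN₀ : N₀ᵀ = N₀)
    (p p₀ : Fin n → ℝ) (b₀ ν ξ₁ ξ₂ : ℝ)
    (h₁ : (N + ξ₁ • N₀).PosDef) (h₂ : (N + ξ₂ • N₀).PosDef) :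
    (ξ₂ - ξ₁) * (gtrsPhi N N₀ p p₀ b₀ ν ξ₁ - gtrsPhi N N₀ p p₀ b₀ ν ξ₂)
      = (gtrsX N N₀ p p₀ ξ₁ - gtrsX N N₀ p p₀ ξ₂) ⬝ᵥ
          (N + ξ₁ • N₀) *ᵥ (gtrsX N N₀ p p₀ ξ₁ - gtrsX N N₀ p p₀ ξ₂)
        + (gtrsX N N₀ p p₀ ξ₁ - gtrsX N N₀ p p₀ ξ₂) ⬝ᵥ
          (N + ξ₂ • N₀) *ᵥ (gtrsX N N₀ p p₀ ξ₁ - gtrsX N N₀ p p₀ ξ₂) := by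
  set x₁ := gtrsX N N₀ p p₀ ξ₁ with hx₁
  set x₂ := gtrsX N N₀ p p₀ ξ₂ with hx₂
  have e₁ : (N + ξ₁ • N₀) *ᵥ x₁ = -(p + ξ₁ • p₀) := gtrs_stat N N₀ p p₀ ξ₁ h₁
  have e₂ : (N + ξ₂ • N₀) *ᵥ x₂ = -(p + ξ₂ • p₀) := gtrs_stat N N₀ p p₀ ξ₂ h₂
  have hv₁ : (N + ξ₁ • N₀) *ᵥ (x₁ - x₂) = (ξ₂ - ξ₁) • (p₀ + N₀ *ᵥ x₂) := by
    have hm : N + ξ₁ • N₀ = (N + ξ₂ • N₀) - (ξ₂ - ξ₁) • N₀ := by module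
    rw [mulVec_sub, e₁, hm, sub_mulVec, smul_mulVec, e₂]
    module
  have hv₂ : (N + ξ₂ • N₀) *ᵥ (x₁ - x₂) = (ξ₂ - ξ₁) • (p₀ + N₀ *ᵥ x₁) := by
    have hm : N + ξ₂ • N₀ = (N + ξ₁ • N₀) + (ξ₂ - ξ₁) • N₀ := by module
    rw [mulVec_sub]
    nth_rewrite 1 [hm]
    rw [add_mulVec, smul_mulVec, e₁, e₂]
    module
  have hsym : x₂ ⬝ᵥ N₀ *ᵥ x₁ = x₁ ⬝ᵥ N₀ *ᵥ x₂ := gtrs_dot_symm hN₀ x₂ x₁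
  have hp₁ : p₀ ⬝ᵥ x₁ = x₁ ⬝ᵥ p₀ := dotProduct_comm _ _
  have hp₂ : p₀ ⬝ᵥ x₂ = x₂ ⬝ᵥ p₀ := dotProduct_comm _ _
  rw [hv₁, hv₂, dotProduct_smul, dotProduct_smul, dotProduct_add, dotProduct_add,
    sub_dotProduct, sub_dotProduct, sub_dotProduct, smul_eq_mul, smul_eq_mul]
  simp only [gtrsPhi, ← hx₁, ← hx₂]
  linear_combination (ξ₂ - ξ₁) * (2 * hp₁ - 2 * hp₂ + hsym)

/-- On `I = {ξ : N + ξN₀ ≻ 0}`, the function `φ` is nonincreasing; moreover, if no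
point `x̄` satisfies both `Nx̄ = −p` and `N₀x̄ = −p₀`, then `φ` is strictly decreasing
on `I` and the equation `φ(ξ) = 0` has at most one solution in `I`. -/
theorem gtrsPhi_monotone {n : ℕ} (N N₀ : Matrix (Fin n) (Fin n) ℝ)
    (hN : N.IsSymm) (hN₀ : N₀.PosDef) (p p₀ : Fin n → ℝ) (b₀ ν : ℝ) :
    (∀ ξ₁ ξ₂ : ℝ, (N + ξ₁ • N₀).PosDef → (N + ξ₂ • N₀).PosDef → ξ₁ < ξ₂ →
      gtrsPhi N N₀ p p₀ b₀ ν ξ₂ ≤ gtrsPhi N N₀ p p₀ b₀ ν ξ₁) ∧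
    ((¬ ∃ xbar : Fin n → ℝ, N.mulVec xbar = -p ∧ N₀.mulVec xbar = -p₀) →
      (∀ ξ₁ ξ₂ : ℝ, (N + ξ₁ • N₀).PosDef → (N + ξ₂ • N₀).PosDef → ξ₁ < ξ₂ →
        gtrsPhi N N₀ p p₀ b₀ ν ξ₂ < gtrsPhi N N₀ p p₀ b₀ ν ξ₁) ∧
      (∀ ξ₁ ξ₂ : ℝ, (N + ξ₁ • N₀).PosDef → (N + ξ₂ • N₀).PosDef →
        gtrsPhi N N₀ p p₀ b₀ ν ξ₁ = 0 → gtrsPhi N N₀ p p₀ b₀ ν ξ₂ = 0 → ξ₁ = ξ₂)) := by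
  have hN₀s : N₀ᵀ = N₀ := by
    have := hN₀.isHermitian
    rwa [Matrix.IsHermitian, conjTranspose_eq_transpose_of_trivial] at this
  -- nonincreasing
  have mono : ∀ ξ₁ ξ₂ : ℝ, (N + ξ₁ • N₀).PosDef → (N + ξ₂ • N₀).PosDef → ξ₁ < ξ₂ →
      gtrsPhi N N₀ p p₀ b₀ ν ξ₂ ≤ gtrsPhi N N₀ p p₀ b₀ ν ξ₁ := by
    intro ξ₁ ξ₂ h₁ h₂ hlt
    have key := gtrs_key N N₀ hN₀s p p₀ b₀ ν ξ₁ ξ₂ h₁ h₂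
    set d := gtrsX N N₀ p p₀ ξ₁ - gtrsX N N₀ p p₀ ξ₂
    have q₁ : 0 ≤ d ⬝ᵥ (N + ξ₁ • N₀) *ᵥ d := by
      simpa using h₁.posSemidef.dotProduct_mulVec_nonneg d
    have q₂ : 0 ≤ d ⬝ᵥ (N + ξ₂ • N₀) *ᵥ d := by
      simpa using h₂.posSemidef.dotProduct_mulVec_nonneg d
    nlinarith [key, q₁, q₂, sub_pos.2 hlt]
  refine ⟨mono, fun hex => ?_⟩
  have strict : ∀ ξ₁ ξ₂ : ℝ, (N + ξ₁ • N₀).PosDef → (N + ξ₂ • N₀).PosDef → ξ₁ < ξ₂ →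
      gtrsPhi N N₀ p p₀ b₀ ν ξ₂ < gtrsPhi N N₀ p p₀ b₀ ν ξ₁ := by
    intro ξ₁ ξ₂ h₁ h₂ hlt
    have key := gtrs_key N N₀ hN₀s p p₀ b₀ ν ξ₁ ξ₂ h₁ h₂
    have hd : gtrsX N N₀ p p₀ ξ₁ - gtrsX N N₀ p p₀ ξ₂ ≠ 0 := by
      intro h0
      have hxeq : gtrsX N N₀ p p₀ ξ₁ = gtrsX N N₀ p p₀ ξ₂ := sub_eq_zero.1 h0
      set xb := gtrsX N N₀ p p₀ ξ₂ with hxb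
      have e₁ : (N + ξ₁ • N₀) *ᵥ xb = -(p + ξ₁ • p₀) := by
        rw [← hxeq]; exact gtrs_stat N N₀ p p₀ ξ₁ h₁
      have e₂ : (N + ξ₂ • N₀) *ᵥ xb = -(p + ξ₂ • p₀) := gtrs_stat N N₀ p p₀ ξ₂ h₂
      have e₁' : N *ᵥ xb + ξ₁ • (N₀ *ᵥ xb) = -p - ξ₁ • p₀ := by
        rw [← smul_mulVec, ← add_mulVec, e₁]; module
      have e₂' : N *ᵥ xb + ξ₂ • (N₀ *ᵥ xb) = -p - ξ₂ • p₀ := by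
        rw [← smul_mulVec, ← add_mulVec, e₂]; module
      have hne : ξ₂ - ξ₁ ≠ 0 := sub_ne_zero.2 hlt.ne'
      have hv : N₀ *ᵥ xb = -p₀ := by
        funext i
        have h1 := congrFun e₁' i
        have h2 := congrFun e₂' i
        simp only [Pi.add_apply, Pi.smul_apply, Pi.sub_apply, Pi.neg_apply,
          smul_eq_mul] at h1 h2
        have h3 : (ξ₂ - ξ₁) * ((N₀ *ᵥ xb) i + p₀ i) = 0 := by linear_combination h2 - h1
        have h4 := (mul_eq_zero.1 h3).resolve_left hne
        show (N₀ *ᵥ xb) i = -p₀ i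
        linarith
      have hw : N *ᵥ xb = -p := by
        funext i
        have h1 := congrFun e₁' i
        have hv' := congrFun hv i
        simp only [Pi.add_apply, Pi.smul_apply, Pi.sub_apply, Pi.neg_apply,
          smul_eq_mul] at h1 hv' ⊢
        linear_combination h1 - ξ₁ * hv'
      exact hex ⟨xb, hw, hv⟩
    set d := gtrsX N N₀ p p₀ ξ₁ - gtrsX N N₀ p p₀ ξ₂ with hdd
    have q₁ : 0 < d ⬝ᵥ (N + ξ₁ • N₀) *ᵥ d := by
      simpa using h₁.dotProduct_mulVec_pos hd
    have q₂ : 0 < d ⬝ᵥ (N + ξ₂ • N₀) *ᵥ d := by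
      simpa using h₂.dotProduct_mulVec_pos hd
    nlinarith [key, q₁, q₂, sub_pos.2 hlt]
  refine ⟨strict, fun ξ₁ ξ₂ h₁ h₂ hz₁ hz₂ => ?_⟩
  rcases lt_trichotomy ξ₁ ξ₂ with h | h | h
  · exact absurd (hz₂ ▸ hz₁ ▸ strict ξ₁ ξ₂ h₁ h₂ h) (lt_irrefl 0)
  · exact h
  · exact absurd (hz₁ ▸ hz₂ ▸ strict ξ₂ ξ₁ h₂ h₁ h) (lt_irrefl 0)
end

section
/- Let N be an n×n real symmetric matrix, N₀ an n×n real symmetric positive definite matrix, p, p₀ ∈ ℝⁿ, and b₀, ν ∈ ℝ. Suppose ξ* lies in I = {ξ ∈ ℝ : N + ξN₀ ≻ 0} and satisfies φ(ξ*) = 0, where x(ξ) = −(N + ξN₀)⁻¹(p + ξp₀) and φ(ξ) = x(ξ)ᵀN₀x(ξ) + 2p₀ᵀx(ξ) + b₀ − ν. Then x(ξ*) is the unique global minimizer of the GTRS: every x ≠ x(ξ*) with xᵀN₀x + 2p₀ᵀx + b₀ = ν satisfies xᵀNx + 2pᵀx > x(ξ*)ᵀNx(ξ*) + 2pᵀx(ξ*).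 -/
open Matrix

/-- If `ξ* ∈ I = {ξ : N + ξN₀ ≻ 0}` satisfies `φ(ξ*) = 0`, then `x(ξ*)` is the unique
global minimizer of the GTRS: every feasible `x ≠ x(ξ*)` has strictly larger
objective value. -/
theorem gtrs_solution_from_phi_root {n : ℕ} (N N₀ : Matrix (Fin n) (Fin n) ℝ)
    (hN : N.IsSymm) (hN₀ : N₀.PosDef) (p p₀ : Fin n → ℝ) (b₀ ν : ℝ)
    (ξs : ℝ) (hpd : (N + ξs • N₀).PosDef)
    (hroot : gtrsX N N₀ p p₀ ξs ⬝ᵥ N₀.mulVec (gtrsX N N₀ p p₀ ξs)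
      + 2 * (p₀ ⬝ᵥ gtrsX N N₀ p p₀ ξs) + b₀ - ν = 0) :
    ∀ x : Fin n → ℝ, x ≠ gtrsX N N₀ p p₀ ξs →
      x ⬝ᵥ N₀.mulVec x + 2 * (p₀ ⬝ᵥ x) + b₀ = ν →
      gtrsX N N₀ p p₀ ξs ⬝ᵥ N.mulVec (gtrsX N N₀ p p₀ ξs)
          + 2 * (p ⬝ᵥ gtrsX N N₀ p p₀ ξs)
        < x ⬝ᵥ N.mulVec x + 2 * (p ⬝ᵥ x) := by
  intro x hx hfeas
  set xs : Fin n → ℝ := gtrsX N N₀ p p₀ ξs with hxs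
  set M : Matrix (Fin n) (Fin n) ℝ := N + ξs • N₀ with hM
  have hMinv : M * M⁻¹ = 1 := Matrix.mul_nonsing_inv M hpd.det_pos.ne'.isUnit
  have hMxs : M.mulVec xs = -(p + ξs • p₀) := by
    rw [hxs, gtrsX, Matrix.mulVec_neg, Matrix.mulVec_mulVec, hM, hMinv, Matrix.one_mulVec]
  have hN₀s : N₀ᵀ = N₀ := by
    have := hN₀.isHermitian
    simpa [Matrix.IsHermitian, Matrix.conjTranspose_eq_transpose_of_trivial] using this
  have hMs : Mᵀ = M := by
    rw [hM, Matrix.transpose_add, Matrix.transpose_smul, hN, hN₀s]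
  have hd : x - xs ≠ 0 := sub_ne_zero.mpr hx
  have hpos : 0 < (x - xs) ⬝ᵥ M.mulVec (x - xs) := by
    have := hpd.dotProduct_mulVec_pos hd
    simpa using this
  have hsym : ∀ u v : Fin n → ℝ, u ⬝ᵥ M.mulVec v = v ⬝ᵥ M.mulVec u := by
    intro u v
    rw [Matrix.dotProduct_mulVec, ← Matrix.mulVec_transpose, hMs, dotProduct_comm]
  have hMx : ∀ u v : Fin n → ℝ, u ⬝ᵥ M.mulVec v
      = u ⬝ᵥ N.mulVec v + ξs * (u ⬝ᵥ N₀.mulVec v) := by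
    intro u v
    rw [hM, Matrix.add_mulVec, dotProduct_add, Matrix.smul_mulVec, dotProduct_smul,
      smul_eq_mul]
  have e1 : x ⬝ᵥ N.mulVec xs + ξs * (x ⬝ᵥ N₀.mulVec xs)
      = -(p ⬝ᵥ x) - ξs * (p₀ ⬝ᵥ x) := by
    rw [← hMx, hMxs]
    simp [dotProduct_comm]
    ring
  have e2 : xs ⬝ᵥ N.mulVec xs + ξs * (xs ⬝ᵥ N₀.mulVec xs)
      = -(p ⬝ᵥ xs) - ξs * (p₀ ⬝ᵥ xs) := by
    rw [← hMx, hMxs]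
    simp [dotProduct_comm]
    ring
  have key : x ⬝ᵥ N.mulVec x + 2 * (p ⬝ᵥ x)
        + ξs * (x ⬝ᵥ N₀.mulVec x + 2 * (p₀ ⬝ᵥ x) + b₀ - ν)
      = (x - xs) ⬝ᵥ M.mulVec (x - xs)
        + (xs ⬝ᵥ N.mulVec xs + 2 * (p ⬝ᵥ xs)
          + ξs * (xs ⬝ᵥ N₀.mulVec xs + 2 * (p₀ ⬝ᵥ xs) + b₀ - ν)) := by
    have expand : (x - xs) ⬝ᵥ M.mulVec (x - xs)
        = x ⬝ᵥ M.mulVec x - x ⬝ᵥ M.mulVec xs - xs ⬝ᵥ M.mulVec x + xs ⬝ᵥ M.mulVec xs := by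
      simp [Matrix.mulVec_sub, sub_dotProduct, dotProduct_sub]
      ring
    rw [expand, hsym xs x, hMx x x, hMx x xs, hMx xs xs]
    linear_combination 2 * e1 - 2 * e2
  have hfeas' : x ⬝ᵥ N₀.mulVec x + 2 * (p₀ ⬝ᵥ x) + b₀ - ν = 0 := by
    rw [hfeas]; ring
  rw [hfeas', hroot] at key
  simp only [mul_zero, add_zero] at key
  linarith [hpos, key]
end
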